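/- arXiv:1503.00340 — 8 statements merged into one kernel-verified Lean document; each statement's English description precedes it below -/
import Mathlib

section
/- Let f : [0,∞) → ℝ be a differentiable, non-increasing, non-negative function with monotone hazard rate (i.e., x ↦ |f'(x)|/f(x) is non-decreasing wherever f(x) > 0). If x̃ > 0 satisfies f(x̃)/|f'(x̃)| > x̃ (with f(x̃) > 0 and f'(x̃) ≠ 0), then f(0) < e·f(x̃). -/
/-- If f is non-increasing, non-negative, with monotone hazard rate, and x̃ > 0
satisfies f(x̃)/|f'(x̃)| > x̃, then f(0) < e·f(x̃). -/
theorem mhr_peak_lt_e_mul (f : ℝ → ℝ) (xt : ℝ)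
    (hxt : 0 < xt)
    (hcont : ContinuousOn f (Set.Icc 0 xt))
    (hdiff : ∀ x ∈ Set.Ioc (0:ℝ) xt, DifferentiableAt ℝ f x)
    (hanti : ∀ x ∈ Set.Icc (0:ℝ) xt, ∀ y ∈ Set.Icc (0:ℝ) xt, x ≤ y → f y ≤ f x)
    (hnonneg : ∀ x ∈ Set.Icc (0:ℝ) xt, 0 ≤ f x)
    (hmhr : ∀ x y : ℝ, 0 < x → x ≤ y → y ≤ xt → 0 < f y →
      |deriv f x| / f x ≤ |deriv f y| / f y)
    (hfxt : 0 < f xt) (hdxt : deriv f xt ≠ 0)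
    (hcond : f xt / |deriv f xt| > xt) :
    f 0 < Real.exp 1 * f xt := by
  have habs : 0 < |deriv f xt| := abs_pos.mpr hdxt
  set l := |deriv f xt| / f xt with hl
  have hlpos : 0 < l := div_pos habs hfxt
  have hlxt : l * xt < 1 := by
    rw [gt_iff_lt, lt_div_iff₀ habs] at hcond
    rw [hl, div_mul_eq_mul_div, div_lt_one hfxt]
    linarith
  have hfpos : ∀ x ∈ Set.Icc (0:ℝ) xt, 0 < f x := fun x hx =>
    lt_of_lt_of_le hfxt (hanti x hx xt ⟨le_of_lt hxt, le_refl xt⟩ hx.2)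
  set g := fun x => f x * Real.exp (l * x) with hg
  have hgc : ContinuousOn g (Set.Icc 0 xt) :=
    hcont.mul ((Real.continuous_exp.comp (continuous_const.mul continuous_id)).continuousOn)
  have hgderiv : ∀ x ∈ interior (Set.Icc (0:ℝ) xt),
      HasDerivAt g (deriv f x * Real.exp (l * x) + f x * (l * Real.exp (l * x))) x := by
    intro x hx
    rw [interior_Icc] at hx
    have h1 : HasDerivAt (fun x => Real.exp (l * x)) (l * Real.exp (l * x)) x := by
      have := ((hasDerivAt_id x).const_mul l).exp
      simpa [mul_comm] using this
    exact (hdiff x ⟨hx.1, hx.2.le⟩).hasDerivAt.mul h1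
  have hmono : MonotoneOn g (Set.Icc 0 xt) := by
    apply monotoneOn_of_deriv_nonneg (convex_Icc 0 xt) hgc
    · intro x hx
      exact (hgderiv x hx).differentiableAt.differentiableWithinAt
    · intro x hx
      rw [(hgderiv x hx).deriv]
      rw [interior_Icc] at hx
      have hfx : 0 < f x := hfpos x ⟨hx.1.le, hx.2.le⟩
      have hb : |deriv f x| ≤ l * f x := by
        have := hmhr x xt hx.1 hx.2.le le_rfl hfxt
        rw [div_le_iff₀ hfx] at this
        linarith [this]
      have hd : -(l * f x) ≤ deriv f x := by
        have := neg_abs_le (deriv f x); linarith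
      nlinarith [Real.exp_pos (l * x)]
  have h0 : g 0 ≤ g xt := hmono ⟨le_rfl, hxt.le⟩ ⟨hxt.le, le_rfl⟩ hxt.le
  have hg0 : g 0 = f 0 := by simp [hg]
  have hlt : f xt * Real.exp (l * xt) < f xt * Real.exp 1 :=
    mul_lt_mul_of_pos_left (Real.exp_lt_exp.mpr hlxt) hfxt
  rw [hg0] at h0
  calc f 0 ≤ f xt * Real.exp (l * xt) := h0
    _ < f xt * Real.exp 1 := hlt
    _ = Real.exp 1 * f xt := mul_comm _ _
end

section
/- Let f : [0,∞) → ℝ be a differentiable, non-increasing, positive function with monotone hazard rate, and let 0 < x₁ < x₂. If |f'(x₁)|/f(x₁) ≥ 1/x₁, then x₁·f(x₁) > x₂·f(x₂). -/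
/-- MHR profit-change lemma, part 1: if |f'(x₁)|/f(x₁) ≥ 1/x₁ then
x₁·f(x₁) > x₂·f(x₂) for x₂ > x₁. -/
theorem mhr_profit_decreasing (f : ℝ → ℝ) (x₁ x₂ : ℝ)
    (hx₁ : 0 < x₁) (hx₁₂ : x₁ < x₂)
    (hdiff : ∀ x ∈ Set.Icc x₁ x₂, DifferentiableAt ℝ f x)
    (hpos : ∀ x ∈ Set.Icc x₁ x₂, 0 < f x)
    (hanti : ∀ x ∈ Set.Icc x₁ x₂, ∀ y ∈ Set.Icc x₁ x₂, x ≤ y → f y ≤ f x)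
    (hmhr : ∀ x ∈ Set.Icc x₁ x₂, ∀ y ∈ Set.Icc x₁ x₂, x ≤ y →
      |deriv f x| / f x ≤ |deriv f y| / f y)
    (hcond : |deriv f x₁| / f x₁ ≥ 1 / x₁) :
    x₁ * f x₁ > x₂ * f x₂ := by
  set g : ℝ → ℝ := fun x => x * f x with hg
  have hcont : ContinuousOn g (Set.Icc x₁ x₂) :=
    continuousOn_id.mul (fun x hx => (hdiff x hx).continuousAt.continuousWithinAt)
  have key : ∀ x ∈ interior (Set.Icc x₁ x₂), deriv g x < 0 := by
    rw [interior_Icc]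
    intro x hx
    have hxI : x ∈ Set.Icc x₁ x₂ := Set.Ioo_subset_Icc_self hx
    have hfx := hpos x hxI
    have hxpos : 0 < x := hx₁.trans hx.1
    have hderiv_le : deriv f x ≤ 0 := by
      have hd := (hdiff x hxI).hasDerivAt
      rw [hasDerivAt_iff_tendsto_slope] at hd
      have hd' : Filter.Tendsto (slope f x) (nhdsWithin x (Set.Ioi x)) (nhds (deriv f x)) :=
        hd.mono_left (nhdsWithin_mono _ fun y hy => ne_of_gt hy)
      refine le_of_tendsto hd' ?_
      filter_upwards [Ioo_mem_nhdsGT_of_mem ⟨le_refl x, hx.2⟩] with y hy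
      have hle : f y ≤ f x := hanti x hxI y ⟨hx.1.le.trans hy.1.le, hy.2.le⟩ hy.1.le
      rw [slope_def_field]
      exact div_nonpos_of_nonpos_of_nonneg (by linarith) (by linarith [hy.1])
    have h1 : 1 / x₁ ≤ |deriv f x| / f x :=
      le_trans hcond (hmhr x₁ ⟨le_refl _, hx₁₂.le⟩ x hxI hx.1.le)
    rw [abs_of_nonpos hderiv_le, div_le_div_iff₀ hx₁ hfx] at h1
    have hdg : deriv g x = 1 * f x + x * deriv f x :=
      ((hasDerivAt_id x).mul (hdiff x hxI).hasDerivAt).deriv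
    rw [hdg]
    nlinarith [hx.1, hfx, mul_pos hfx hx₁]
  have hstrict : StrictAntiOn g (Set.Icc x₁ x₂) :=
    strictAntiOn_of_deriv_neg (convex_Icc _ _) hcont key
  exact hstrict ⟨le_refl _, hx₁₂.le⟩ ⟨hx₁₂.le, le_refl _⟩ hx₁₂
end

section
/- Let f : [0,∞) → ℝ be a differentiable, non-increasing, positive function with monotone hazard rate, and let 0 < x₁ < x₂. If |f'(x₂)|/f(x₂) ≤ 1/x₂, then x₂·f(x₂) > x₁·f(x₁). -/
/-! The revenue `x ↦ x * f x` has derivative `f x + x * f' x = f x * (1 - x * h x)`, where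
`h = |f'| / f` is the hazard rate. Monotonicity of the hazard rate gives `h x ≤ h x₂ ≤ 1 / x₂`
on `[x₁, x₂]`, so `x * h x < 1` for `x < x₂` and the revenue is strictly increasing there. -/

open Set

theorem pos_add_mul_of_abs_div_le_one_div {a d x c : ℝ} (ha : 0 < a) (hx : 0 ≤ x) (hxc : x < c)
    (h : |d| / a ≤ 1 / c) : 0 < a + x * d := by
  have hc : 0 < c := hx.trans_lt hxc
  have hd : |d| ≤ a / c := by
    rw [div_le_div_iff₀ ha hc] at h
    rw [le_div_iff₀ hc]
    linarith
  have : x * -d < a :=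
    calc x * -d ≤ x * |d| := mul_le_mul_of_nonneg_left (neg_le_abs d) hx
      _ ≤ x * (a / c) := mul_le_mul_of_nonneg_left hd hx
      _ < c * (a / c) := mul_lt_mul_of_pos_right hxc (div_pos ha hc)
      _ = a := mul_div_cancel₀ a hc.ne'
  linarith

theorem strictMonoOn_mul_self_of_abs_deriv_div_le {f : ℝ → ℝ} {a b : ℝ} (ha : 0 ≤ a)
    (hdiff : ∀ x ∈ Icc a b, DifferentiableAt ℝ f x) (hpos : ∀ x ∈ Ioo a b, 0 < f x)
    (hhazard : ∀ x ∈ Ioo a b, |deriv f x| / f x ≤ 1 / b) :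
    StrictMonoOn (fun x => x * f x) (Icc a b) := by
  have hderiv : ∀ x ∈ Icc a b, HasDerivAt (fun x => x * f x) (f x + x * deriv f x) x :=
    fun x hx => by simpa using (hasDerivAt_id' x).fun_mul (hdiff x hx).hasDerivAt
  refine strictMonoOn_of_deriv_pos (convex_Icc a b)
    (fun x hx => (hderiv x hx).continuousAt.continuousWithinAt) fun x hx => ?_
  rw [interior_Icc] at hx
  rw [(hderiv x (Ioo_subset_Icc_self hx)).deriv]
  exact pos_add_mul_of_abs_div_le_one_div (hpos x hx) (ha.trans hx.1.le) hx.2 (hhazard x hx)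

theorem mhr_profit_increasing_general (f : ℝ → ℝ) (x₁ x₂ : ℝ)
    (hx₁ : 0 < x₁) (hx₁₂ : x₁ < x₂)
    (hdiff : ∀ x ∈ Set.Icc x₁ x₂, DifferentiableAt ℝ f x)
    (hpos : ∀ x ∈ Set.Icc x₁ x₂, 0 < f x)
    (hmhr : ∀ x ∈ Set.Icc x₁ x₂, ∀ y ∈ Set.Icc x₁ x₂, x ≤ y →
      |deriv f x| / f x ≤ |deriv f y| / f y)
    (hcond : |deriv f x₂| / f x₂ ≤ 1 / x₂) :
    x₂ * f x₂ > x₁ * f x₁ := by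
  have hx₂_mem : x₂ ∈ Icc x₁ x₂ := right_mem_Icc.2 hx₁₂.le
  have hmono := strictMonoOn_mul_self_of_abs_deriv_div_le hx₁.le hdiff
    (fun x hx => hpos x (Ioo_subset_Icc_self hx))
    (fun x hx => (hmhr x (Ioo_subset_Icc_self hx) x₂ hx₂_mem hx.2.le).trans hcond)
  exact hmono (left_mem_Icc.2 hx₁₂.le) hx₂_mem hx₁₂

/-- MHR profit-change lemma, part 2: if |f'(x₂)|/f(x₂) ≤ 1/x₂ then
x₂·f(x₂) > x₁·f(x₁) for x₁ < x₂. -/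
theorem mhr_profit_increasing (f : ℝ → ℝ) (x₁ x₂ : ℝ)
    (hx₁ : 0 < x₁) (hx₁₂ : x₁ < x₂)
    (hdiff : ∀ x ∈ Set.Icc x₁ x₂, DifferentiableAt ℝ f x)
    (hpos : ∀ x ∈ Set.Icc x₁ x₂, 0 < f x)
    (hanti : ∀ x ∈ Set.Icc x₁ x₂, ∀ y ∈ Set.Icc x₁ x₂, x ≤ y → f y ≤ f x)
    (hmhr : ∀ x ∈ Set.Icc x₁ x₂, ∀ y ∈ Set.Icc x₁ x₂, x ≤ y →
      |deriv f x| / f x ≤ |deriv f y| / f y)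
    (hcond : |deriv f x₂| / f x₂ ≤ 1 / x₂) :
    x₂ * f x₂ > x₁ * f x₁ :=
  mhr_profit_increasing_general f x₁ x₂ hx₁ hx₁₂ hdiff hpos hmhr hcond
end

section
/- Let f : [0,∞) → ℝ be a differentiable, non-increasing, positive function with monotone hazard rate. Suppose 0 < x₁ < x₂ satisfy f(0) = √e · f(x₁) and f(0) ≤ e · f(x₂). Then x₂ ≤ 2·x₁. -/
/-!
Since `f` is positive and non-increasing, its hazard rate `|f'| / f` is `-(log ∘ f)'`, so a
non-decreasing hazard rate makes `log ∘ f` concave on `[0, x₂]`. The first hypothesis says that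
`log f` drops by `1/2` on `[0, x₁]`, the second that it drops by at most `1` on `[0, x₂]`, i.e. by
at most `1/2` on `[x₁, x₂]`. By concavity the slope on `[x₁, x₂]` is at most the slope on
`[0, x₁]`, which forces `x₂ - x₁ ≤ x₁`.
-/

open Set Real

lemma AntitoneOn.deriv_nonpos_of_mem_interior {f : ℝ → ℝ} {s : Set ℝ} {x : ℝ}
    (hf : AntitoneOn f s) (hx : x ∈ interior s) : deriv f x ≤ 0 := by
  rw [← derivWithin_of_mem_nhds (mem_interior_iff_mem_nhds.mp hx)]
  exact hf.derivWithin_nonpos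

theorem concaveOn_log_of_monotoneOn_hazard {f : ℝ → ℝ} {a b : ℝ}
    (hcont : ContinuousOn f (Icc a b)) (hpos : ∀ x ∈ Icc a b, 0 < f x)
    (hdiff : ∀ x ∈ Ioo a b, DifferentiableAt ℝ f x) (hanti : AntitoneOn f (Icc a b))
    (hmhr : MonotoneOn (fun x => |deriv f x| / f x) (Ioo a b)) :
    ConcaveOn ℝ (Icc a b) (fun x => log (f x)) := by
  have hderiv : ∀ x ∈ Ioo a b, deriv (fun x => log (f x)) x = -(|deriv f x| / f x) := by
    intro x hx
    have hnonpos : deriv f x ≤ 0 :=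
      hanti.deriv_nonpos_of_mem_interior (by rwa [interior_Icc])
    rw [deriv.log (hdiff x hx) (hpos x (Ioo_subset_Icc_self hx)).ne', abs_of_nonpos hnonpos,
      neg_div, neg_neg]
  refine AntitoneOn.concaveOn_of_deriv (convex_Icc a b)
    (hcont.log fun x hx => (hpos x hx).ne') ?_ ?_ <;> rw [interior_Icc]
  · exact fun x hx =>
      ((hdiff x hx).log (hpos x (Ioo_subset_Icc_self hx)).ne').differentiableWithinAt
  · intro x hx y hy hxy
    rw [hderiv x hx, hderiv y hy, neg_le_neg_iff]
    exact hmhr hx hy hxy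

theorem ConcaveOn.sub_le_two_mul_sub_of_drop_le_two_mul {g : ℝ → ℝ} {a b c : ℝ}
    (hg : ConcaveOn ℝ (Icc a c) g) (hab : a < b) (hbc : b < c) (hdrop : 0 < g a - g b)
    (h : g a - g c ≤ 2 * (g a - g b)) : c - a ≤ 2 * (b - a) := by
  have hslope := hg.slope_anti_adjacent (left_mem_Icc.mpr (hab.trans hbc).le)
    (right_mem_Icc.mpr (hab.trans hbc).le) hab hbc
  rw [div_le_div_iff₀ (sub_pos.mpr hbc) (sub_pos.mpr hab)] at hslope
  nlinarith

/-- MHR demand-drop lemma: if f(0) = √e·f(x₁) and f(0) ≤ e·f(x₂) for an MHR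
non-increasing positive function f, then x₂ ≤ 2·x₁. -/
theorem mhr_demand_drop (f : ℝ → ℝ) (x₁ x₂ : ℝ)
    (hx₁ : 0 < x₁) (hx₁₂ : x₁ < x₂)
    (hcont : ContinuousOn f (Set.Icc 0 x₂))
    (hdiff : ∀ x ∈ Set.Ioc (0:ℝ) x₂, DifferentiableAt ℝ f x)
    (hpos : ∀ x ∈ Set.Ioc (0:ℝ) x₂, 0 < f x)
    (hanti : ∀ x ∈ Set.Icc (0:ℝ) x₂, ∀ y ∈ Set.Icc (0:ℝ) x₂, x ≤ y → f y ≤ f x)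
    (hmhr : ∀ x ∈ Set.Ioc (0:ℝ) x₂, ∀ y ∈ Set.Ioc (0:ℝ) x₂, x ≤ y →
      |deriv f x| / f x ≤ |deriv f y| / f y)
    (h1 : f 0 = Real.sqrt (Real.exp 1) * f x₁)
    (h2 : f 0 ≤ Real.exp 1 * f x₂) :
    x₂ ≤ 2 * x₁ := by
  have hx₂ : 0 < x₂ := hx₁.trans hx₁₂
  have hf₂ : 0 < f x₂ := hpos x₂ ⟨hx₂, le_rfl⟩
  have hposIcc : ∀ x ∈ Icc 0 x₂, 0 < f x := fun x hx =>
    hf₂.trans_le (hanti x hx x₂ ⟨hx₂.le, le_rfl⟩ hx.2)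
  have hconcave := concaveOn_log_of_monotoneOn_hazard hcont hposIcc
    (fun x hx => hdiff x (Ioo_subset_Ioc_self hx)) hanti
    (MonotoneOn.mono hmhr Ioo_subset_Ioc_self)
  have hdrop₁ : log (f 0) - log (f x₁) = 1 / 2 := by
    rw [h1, log_mul (by positivity) (hpos x₁ ⟨hx₁, hx₁₂.le⟩).ne', log_sqrt (exp_pos 1).le,
      log_exp]
    ring
  have hdrop₂ : log (f 0) - log (f x₂) ≤ 1 := by
    have := log_le_log (hposIcc 0 ⟨le_rfl, hx₂.le⟩) h2
    rw [log_mul (exp_pos 1).ne' hf₂.ne', log_exp] at this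
    linarith
  simpa using hconcave.sub_le_two_mul_sub_of_drop_le_two_mul hx₁ hx₁₂ (by linarith)
    (by linarith)
end

section
/- Let λ : [0,∞) → ℝ be differentiable, non-increasing, positive, with monotone hazard rate, and suppose at some point x_e > 0 the stopping equality λ(x_e) − r = (1/e)(λ(0) − r) holds for a constant r with 0 ≤ r < λ(x_e). Then (λ(x_e) − r)/|λ'(x_e)| ≤ x_e. -/
/-!
Put `f = λ - r`, which is positive on `[0, x_e]`. The stopping equality says that `log f` drops by
exactly `1` over `[0, x_e]`, so by the mean value theorem the hazard rate `|f'|/f` equals `1/x_e`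
somewhere in `(0, x_e)`. The hazard rate of `f` is that of `λ` times `λ/(λ - r)`, and both factors
are non-decreasing because `λ` is MHR and non-increasing with `r ≥ 0`; hence
`1/x_e ≤ |f'(x_e)|/f(x_e)`.
-/

open Set Real

theorem exists_logDeriv_eq_log_slope {f : ℝ → ℝ} {a b : ℝ} (hab : a < b)
    (hcont : ContinuousOn f (Icc a b)) (hdiff : ∀ x ∈ Ioo a b, DifferentiableAt ℝ f x)
    (hpos : ∀ x ∈ Icc a b, 0 < f x) :
    ∃ c ∈ Ioo a b, logDeriv f c = (log (f b) - log (f a)) / (b - a) := by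
  have hlog_cont : ContinuousOn (log ∘ f) (Icc a b) :=
    hcont.log fun x hx => (hpos x hx).ne'
  have hlog_diff : ∀ x ∈ Ioo a b, HasDerivAt (log ∘ f) (logDeriv f x) x := fun x hx =>
    ((hdiff x hx).hasDerivAt.log (hpos x (Ioo_subset_Icc_self hx)).ne').congr_deriv rfl
  exact exists_hasDerivAt_eq_slope (log ∘ f) (logDeriv f) hab hlog_cont hlog_diff

theorem div_abs_deriv_le_of_exp_mul_le {f : ℝ → ℝ} {a b : ℝ} (hab : a < b)
    (hcont : ContinuousOn f (Icc a b)) (hdiff : ∀ x ∈ Ioo a b, DifferentiableAt ℝ f x)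
    (hpos : ∀ x ∈ Icc a b, 0 < f x)
    (hhazard : ∀ x ∈ Ioo a b, |deriv f x| / f x ≤ |deriv f b| / f b)
    (hdrop : exp 1 * f b ≤ f a) :
    f b / |deriv f b| ≤ b - a := by
  have hfb := hpos b (right_mem_Icc.mpr hab.le)
  have hlen : 0 < b - a := sub_pos.mpr hab
  obtain ⟨c, hc, hslope⟩ := exists_logDeriv_eq_log_slope hab hcont hdiff hpos
  have hlog_drop : 1 ≤ log (f a) - log (f b) := by
    have := log_le_log (by positivity) hdrop
    rw [log_mul (exp_pos 1).ne' hfb.ne', log_exp] at this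
    linarith
  have hhazard_c : 1 / (b - a) ≤ |deriv f c| / f c := calc
    1 / (b - a) ≤ (log (f a) - log (f b)) / (b - a) := by gcongr
    _ = -logDeriv f c := by rw [hslope]; ring
    _ ≤ |deriv f c| / f c := by
      rw [logDeriv_apply, ← neg_div]
      gcongr
      · exact (hpos c (Ioo_subset_Icc_self hc)).le
      · exact neg_le_abs _
  have key : 1 / (b - a) ≤ |deriv f b| / f b := hhazard_c.trans (hhazard c hc)
  rw [div_le_div_iff₀ hlen hfb] at key
  exact div_le_of_le_mul₀ (abs_nonneg _) hlen.le (by linarith)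

theorem abs_div_sub_le_abs_div_sub {p q u v r : ℝ} (hr : 0 ≤ r) (hrv : r < v) (hvu : v ≤ u)
    (h : |p| / u ≤ |q| / v) :
    |p| / (u - r) ≤ |q| / (v - r) := by
  have hv : 0 < v := hr.trans_lt hrv
  have hu : 0 < u := hv.trans_le hvu
  have hur : 0 < u - r := by linarith
  have hvr : 0 < v - r := by linarith
  have hfactor : u / (u - r) ≤ v / (v - r) := by
    rw [div_le_div_iff₀ hur hvr]
    nlinarith
  calc |p| / (u - r) = |p| / u * (u / (u - r)) := by field_simp
    _ ≤ |q| / v * (v / (v - r)) := by gcongr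
    _ = |q| / (v - r) := by field_simp

theorem stopping_equality_hazard_bound_general (lam : ℝ → ℝ) (xe r : ℝ)
    (hxe : 0 < xe)
    (hcont : ContinuousOn lam (Set.Icc 0 xe))
    (hdiff : ∀ x ∈ Set.Ioc (0:ℝ) xe, DifferentiableAt ℝ lam x)
    (hanti : ∀ x ∈ Set.Icc (0:ℝ) xe, ∀ y ∈ Set.Icc (0:ℝ) xe, x ≤ y → lam y ≤ lam x)
    (hmhr : ∀ x ∈ Set.Ioc (0:ℝ) xe, ∀ y ∈ Set.Ioc (0:ℝ) xe, x ≤ y →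
      |deriv lam x| / lam x ≤ |deriv lam y| / lam y)
    (hr0 : 0 ≤ r) (hrlt : r < lam xe)
    (hstop : lam xe - r = (1/Real.exp 1) * (lam 0 - r)) :
    (lam xe - r) / |deriv lam xe| ≤ xe := by
  have hxe_mem : xe ∈ Icc 0 xe := right_mem_Icc.mpr hxe.le
  have hderiv : deriv (lam · - r) = deriv lam := deriv_sub_const_fun r
  have hpos : ∀ x ∈ Icc 0 xe, 0 < lam x - r := fun x hx =>
    sub_pos.mpr (hrlt.trans_le (hanti x hx xe hxe_mem hx.2))
  have hdrop : exp 1 * (lam xe - r) ≤ lam 0 - r := by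
    rw [hstop, ← mul_assoc, mul_one_div_cancel (exp_pos 1).ne', one_mul]
  have hhazard : ∀ x ∈ Ioo 0 xe,
      |deriv (lam · - r) x| / (lam x - r) ≤ |deriv (lam · - r) xe| / (lam xe - r) :=
    fun x hx => by
      rw [hderiv]
      exact abs_div_sub_le_abs_div_sub hr0 hrlt
        (hanti x (Ioo_subset_Icc_self hx) xe hxe_mem hx.2.le)
        (hmhr x (Ioo_subset_Ioc_self hx) xe (right_mem_Ioc.mpr hxe) hx.2.le)
  have hbound := div_abs_deriv_le_of_exp_mul_le (f := (lam · - r)) hxe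
    (hcont.sub continuousOn_const) (fun x hx => (hdiff x (Ioo_subset_Ioc_self hx)).sub_const r)
    hpos hhazard hdrop
  rwa [hderiv, sub_zero] at hbound

/-- Hazard-rate consequence of the stopping equality: if
λ(x_e) − r = (1/e)(λ(0) − r), then (λ(x_e) − r)/|λ'(x_e)| ≤ x_e. -/
theorem stopping_equality_hazard_bound (lam : ℝ → ℝ) (xe r : ℝ)
    (hxe : 0 < xe)
    (hcont : ContinuousOn lam (Set.Icc 0 xe))
    (hdiff : ∀ x ∈ Set.Ioc (0:ℝ) xe, DifferentiableAt ℝ lam x)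
    (hanti : ∀ x ∈ Set.Icc (0:ℝ) xe, ∀ y ∈ Set.Icc (0:ℝ) xe, x ≤ y → lam y ≤ lam x)
    (hpos : ∀ x ∈ Set.Icc (0:ℝ) xe, 0 < lam x)
    (hmhr : ∀ x ∈ Set.Ioc (0:ℝ) xe, ∀ y ∈ Set.Ioc (0:ℝ) xe, x ≤ y →
      |deriv lam x| / lam x ≤ |deriv lam y| / lam y)
    (hr0 : 0 ≤ r) (hrlt : r < lam xe)
    (hd : deriv lam xe ≠ 0)
    (hstop : lam xe - r = (1/Real.exp 1) * (lam 0 - r)) :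
    (lam xe - r) / |deriv lam xe| ≤ xe :=
  stopping_equality_hazard_bound_general lam xe r hxe hcont hdiff hanti hmhr hr0 hrlt hstop
end

section
/- In a finite bipartite market with convex differentiable item costs, let x¹ and x² be buyer demand vectors with x² ≥ x¹ componentwise, and let z¹, z² be corresponding min-cost allocations. Then for every item t, c_t(z¹_t) ≤ c_t(z²_t), and for every buyer i, the minimum marginal cost among items allocated to i satisfies r_i(z¹) ≤ r_i(z²). -/
open Finset

def Feasible {B S : Type*} [Fintype S] (E : B → S → Prop)
    (x : B → ℝ) (y : B → S → ℝ) : Prop :=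
  (∀ i t, 0 ≤ y i t) ∧ (∀ i t, y i t ≠ 0 → E i t) ∧ (∀ i, ∑ t, y i t = x i)

def itemLoad {B S : Type*} [Fintype B] (y : B → S → ℝ) (t : S) : ℝ :=
  ∑ i, y i t

def totalCost {B S : Type*} [Fintype B] [Fintype S]
    (C : S → ℝ → ℝ) (y : B → S → ℝ) : ℝ :=
  ∑ t, C t (itemLoad y t)

def IsMinCost {B S : Type*} [Fintype B] [Fintype S]
    (E : B → S → Prop) (C : S → ℝ → ℝ) (x : B → ℝ) (y : B → S → ℝ) : Prop :=
  Feasible E x y ∧ ∀ y', Feasible E x y' → totalCost C y ≤ totalCost C y'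

/-!
At a min-cost allocation, shifting a small amount ε of buyer `i`'s allocation from an item `t`
it uses to an adjacent item `t'` stays feasible, and the cost changes at rate
`c t' - c t`; so every item a buyer uses has minimal marginal cost among its neighbours.

Suppose `c t₀` were smaller at `z₂` than at `z₁`, so that `t₀` carries less load under `z₂`.
Follow alternating paths of the difference `z₁ - z₂` out of `t₀`: from `t` to `t'` when some
buyer takes more of `t` under `z₁` and more of `t'` under `z₂`. A buyer with surplus inside the
reachable set has all its deficit items inside it too, so, as demands only grow, the reachable
set cannot carry more total load under `z₁` than under `z₂`. Hence some reachable `t` has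
larger load under `z₂`. Along the path marginal costs rise at `z₁` and fall at `z₂`, giving
`c t₀ (z₁) ≤ c t (z₁) ≤ c t (z₂) ≤ c t₀ (z₂)`, a contradiction.
-/

theorem HasDerivAt.nonneg_of_forall_le_add {g : ℝ → ℝ} {D a δ : ℝ} (hg : HasDerivAt g D a)
    (hδ : 0 < δ) (hmin : ∀ ε ∈ Set.Ioc 0 δ, g a ≤ g (a + ε)) : 0 ≤ D := by
  refine ge_of_tendsto hg.tendsto_slope_zero_right ?_
  filter_upwards [Ioc_mem_nhdsGT hδ] with ε hε
  exact smul_nonneg (inv_nonneg.2 hε.1.le) (sub_nonneg.2 (hmin ε hε))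

theorem sum_sub_nonpos_of_sum_le_of_closed {S : Type*} [Fintype S] {a b : S → ℝ}
    (hab : ∑ t, a t ≤ ∑ t, b t) {T : Finset S}
    (hT : ∀ t ∈ T, b t < a t → ∀ t', a t' < b t' → t' ∈ T) :
    ∑ t ∈ T, (a t - b t) ≤ 0 := by
  by_cases hsurplus : ∃ t ∈ T, b t < a t
  · obtain ⟨t, ht, hlt⟩ := hsurplus
    calc ∑ s ∈ T, (a s - b s)
        ≤ ∑ s, (a s - b s) :=
          sum_le_sum_of_subset_of_nonneg (subset_univ T) fun s _ hs =>
            sub_nonneg.2 (not_lt.1 fun hs' => hs (hT t ht hlt s hs'))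
      _ = ∑ s, a s - ∑ s, b s := sum_sub_distrib ..
      _ ≤ 0 := sub_nonpos.2 hab
  · push Not at hsurplus
    exact sum_nonpos fun t ht => sub_nonpos.2 (hsurplus t ht)

section Market

variable {B S : Type*}

theorem itemLoad_add_smul [Fintype B] (z d : B → S → ℝ) (ε : ℝ) (t : S) :
    itemLoad (z + ε • d) t = itemLoad z t + ε * itemLoad d t := by
  simp only [itemLoad, Pi.add_apply, Pi.smul_apply, smul_eq_mul, sum_add_distrib, mul_sum]

theorem hasDerivAt_totalCost_add_smul [Fintype B] [Fintype S] {C c : S → ℝ → ℝ}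
    (hderiv : ∀ t v, HasDerivAt (C t) (c t v) v) (z d : B → S → ℝ) :
    HasDerivAt (fun ε : ℝ => totalCost C (z + ε • d))
      (∑ t, c t (itemLoad z t) * itemLoad d t) 0 := by
  simp only [totalCost, itemLoad_add_smul]
  refine HasDerivAt.fun_sum fun t _ => ?_
  have hline : HasDerivAt (fun ε => itemLoad z t + ε * itemLoad d t) (itemLoad d t) 0 := by
    simpa using ((hasDerivAt_id (0 : ℝ)).mul_const (itemLoad d t)).const_add (itemLoad z t)
  exact (hderiv t _).comp_of_eq 0 hline (by simp)

theorem IsMinCost.sum_marginal_mul_nonneg [Fintype B] [Fintype S] {E : B → S → Prop}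
    {C c : S → ℝ → ℝ} (hderiv : ∀ t v, HasDerivAt (C t) (c t v) v) {x : B → ℝ}
    {z d : B → S → ℝ} (hz : IsMinCost E C x z) {δ : ℝ} (hδ : 0 < δ)
    (hfeas : ∀ ε ∈ Set.Ioc 0 δ, Feasible E x (z + ε • d)) :
    0 ≤ ∑ t, c t (itemLoad z t) * itemLoad d t :=
  (hasDerivAt_totalCost_add_smul hderiv z d).nonneg_of_forall_le_add hδ fun ε hε => by
    simpa using hz.2 _ (hfeas ε hε)

def transferDir [DecidableEq B] [DecidableEq S] (i : B) (t t' : S) : B → S → ℝ :=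
  Pi.single i (Pi.single t' 1 - Pi.single t 1)

theorem itemLoad_transferDir [Fintype B] [DecidableEq B] [DecidableEq S] (i : B) (t t' : S) :
    itemLoad (transferDir i t t') = Pi.single t' 1 - Pi.single t 1 := by
  ext s
  simp [itemLoad, transferDir, Pi.single_apply, ite_apply]

theorem Feasible.add_smul_transferDir [Fintype S] [DecidableEq B] [DecidableEq S]
    {E : B → S → Prop} {x : B → ℝ} {z : B → S → ℝ} (hz : Feasible E x z) {i : B} {t t' : S}
    (ht' : E i t') {ε : ℝ} (hε₀ : 0 ≤ ε) (hε : ε ≤ z i t) :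
    Feasible E x (z + ε • transferDir i t t') := by
  obtain ⟨hnn, hsupp, hrow⟩ := hz
  have happly : ∀ j s, (z + ε • transferDir i t t') j s =
      z j s + if j = i then (if s = t' then ε else 0) - (if s = t then ε else 0) else 0 := by
    intro j s
    simp only [transferDir, Pi.add_apply, Pi.smul_apply, Pi.single_apply, ite_apply,
      Pi.sub_apply]
    split_ifs <;> simp
  refine ⟨fun j s => ?_, fun j s hne => ?_, fun j => ?_⟩
  · have := hnn j s
    rw [happly]
    split_ifs <;> grind
  · rw [happly] at hne
    split_ifs at hne <;> grind
  · simp [happly, sum_add_distrib, hrow]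

theorem IsMinCost.marginal_le_of_pos [Fintype B] [Fintype S] {E : B → S → Prop}
    {C c : S → ℝ → ℝ} (hderiv : ∀ t v, HasDerivAt (C t) (c t v) v) {x : B → ℝ}
    {z : B → S → ℝ} (hz : IsMinCost E C x z) {i : B} {t t' : S} (hpos : 0 < z i t)
    (ht' : E i t') : c t (itemLoad z t) ≤ c t' (itemLoad z t') := by
  classical
  have h := hz.sum_marginal_mul_nonneg hderiv hpos fun ε hε =>
    hz.1.add_smul_transferDir ht' hε.1.le hε.2
  simpa [itemLoad_transferDir, Pi.single_apply, mul_sub, sum_sub_distrib] using h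

def ShiftStep (z₁ z₂ : B → S → ℝ) (t t' : S) : Prop :=
  ∃ i, z₂ i t < z₁ i t ∧ z₁ i t' < z₂ i t'

open Relation in
theorem marginal_le_of_reflTransGen_shiftStep [Fintype B] [Fintype S] {E : B → S → Prop}
    {C c : S → ℝ → ℝ} (hderiv : ∀ t v, HasDerivAt (C t) (c t v) v) {x₁ x₂ : B → ℝ}
    {z₁ z₂ : B → S → ℝ} (hz₁ : IsMinCost E C x₁ z₁) (hz₂ : IsMinCost E C x₂ z₂) {t₀ t : S}
    (h : ReflTransGen (ShiftStep z₁ z₂) t₀ t) :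
    c t₀ (itemLoad z₁ t₀) ≤ c t (itemLoad z₁ t) ∧ c t (itemLoad z₂ t) ≤ c t₀ (itemLoad z₂ t₀) := by
  induction h with
  | refl => exact ⟨le_rfl, le_rfl⟩
  | @tail t t' _ hstep ih =>
    obtain ⟨i, hmore₁, hmore₂⟩ := hstep
    have hpos₁ : 0 < z₁ i t := (hz₂.1.1 i t).trans_lt hmore₁
    have hpos₂ : 0 < z₂ i t' := (hz₁.1.1 i t').trans_lt hmore₂
    exact ⟨ih.1.trans (hz₁.marginal_le_of_pos hderiv hpos₁ (hz₂.1.2.1 i t' hpos₂.ne')),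
      (hz₂.marginal_le_of_pos hderiv hpos₂ (hz₁.1.2.1 i t hpos₁.ne')).trans ih.2⟩

theorem sum_itemLoad_sub_nonpos [Fintype B] [Fintype S] {z₁ z₂ : B → S → ℝ}
    (hrow : ∀ j, ∑ t, z₁ j t ≤ ∑ t, z₂ j t) {T : Finset S}
    (hT : ∀ t ∈ T, ∀ t', ShiftStep z₁ z₂ t t' → t' ∈ T) :
    ∑ t ∈ T, (itemLoad z₁ t - itemLoad z₂ t) ≤ 0 := by
  have hswap : ∑ t ∈ T, (itemLoad z₁ t - itemLoad z₂ t) = ∑ j, ∑ t ∈ T, (z₁ j t - z₂ j t) := by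
    simp only [itemLoad, ← sum_sub_distrib]
    exact sum_comm
  rw [hswap]
  exact sum_nonpos fun j _ => sum_sub_nonpos_of_sum_le_of_closed (hrow j)
    fun t ht hmore₁ t' hmore₂ => hT t ht t' ⟨j, hmore₁, hmore₂⟩

open Relation in
theorem exists_reflTransGen_shiftStep_itemLoad_lt [Fintype B] [Fintype S] {z₁ z₂ : B → S → ℝ}
    (hrow : ∀ j, ∑ t, z₁ j t ≤ ∑ t, z₂ j t) {t₀ : S} (h : itemLoad z₂ t₀ < itemLoad z₁ t₀) :
    ∃ t, ReflTransGen (ShiftStep z₁ z₂) t₀ t ∧ itemLoad z₁ t < itemLoad z₂ t := by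
  classical
  by_contra! hge
  set T := univ.filter (ReflTransGen (ShiftStep z₁ z₂) t₀)
  have hclosed : ∀ t ∈ T, ∀ t', ShiftStep z₁ z₂ t t' → t' ∈ T := by
    simp only [T, mem_filter, mem_univ, true_and]
    exact fun t ht t' hstep => ht.tail hstep
  have hpos : 0 < ∑ t ∈ T, (itemLoad z₁ t - itemLoad z₂ t) :=
    sum_pos' (fun t ht => sub_nonneg.2 (hge t (mem_filter.1 ht).2))
      ⟨t₀, mem_filter.2 ⟨mem_univ _, .refl⟩, sub_pos.2 h⟩
  exact (sum_itemLoad_sub_nonpos hrow hclosed).not_gt hpos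

end Market

theorem min_cost_marginal_monotone_general {B S : Type*} [Fintype B] [Fintype S]
    (E : B → S → Prop) [∀ i t, Decidable (E i t)]
    (C c : S → ℝ → ℝ)
    (hderiv : ∀ t v, HasDerivAt (C t) (c t v) v)
    (hcmono : ∀ t, Monotone (c t))
    (x₁ x₂ : B → ℝ) (hx : ∀ i, x₁ i ≤ x₂ i)
    (z₁ z₂ : B → S → ℝ)
    (hz₁ : IsMinCost E C x₁ z₁) (hz₂ : IsMinCost E C x₂ z₂)
    (hadj : ∀ i : B, (Finset.univ.filter fun t => E i t).Nonempty) :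
    (∀ t, c t (itemLoad z₁ t) ≤ c t (itemLoad z₂ t)) ∧
    (∀ i : B,
      (Finset.univ.filter fun t => E i t).inf' (hadj i)
        (fun t => c t (itemLoad z₁ t)) ≤
      (Finset.univ.filter fun t => E i t).inf' (hadj i)
        (fun t => c t (itemLoad z₂ t))) := by
  have hrow : ∀ j, ∑ t, z₁ j t ≤ ∑ t, z₂ j t := fun j => by
    rw [hz₁.1.2.2 j, hz₂.1.2.2 j]
    exact hx j
  have hitem : ∀ t, c t (itemLoad z₁ t) ≤ c t (itemLoad z₂ t) := by
    intro t₀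
    by_contra! hlt
    have hload : itemLoad z₂ t₀ < itemLoad z₁ t₀ := (hcmono t₀).reflect_lt hlt
    obtain ⟨t, hreach, hlt'⟩ := exists_reflTransGen_shiftStep_itemLoad_lt hrow hload
    obtain ⟨h₁, h₂⟩ := marginal_le_of_reflTransGen_shiftStep hderiv hz₁ hz₂ hreach
    exact hlt.not_ge (h₁.trans ((hcmono t hlt'.le).trans h₂))
  exact ⟨hitem, fun i => le_inf' _ _ fun t ht => (inf'_le _ ht).trans (hitem t)⟩

/-- Monotonicity of marginal costs in the demand: if x² ≥ x¹ componentwise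
then every item's marginal cost, and every buyer's minimal available marginal
cost, is no smaller at the min-cost flow for x². -/
theorem min_cost_marginal_monotone {B S : Type*} [Fintype B] [Fintype S]
    (E : B → S → Prop) [∀ i t, Decidable (E i t)]
    (C c : S → ℝ → ℝ)
    (hCconv : ∀ t, ConvexOn ℝ Set.univ (C t))
    (hderiv : ∀ t v, HasDerivAt (C t) (c t v) v)
    (hcmono : ∀ t, Monotone (c t))
    (x₁ x₂ : B → ℝ) (hx : ∀ i, x₁ i ≤ x₂ i)
    (z₁ z₂ : B → S → ℝ)
    (hz₁ : IsMinCost E C x₁ z₁) (hz₂ : IsMinCost E C x₂ z₂)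
    (hadj : ∀ i : B, (Finset.univ.filter fun t => E i t).Nonempty) :
    (∀ t, c t (itemLoad z₁ t) ≤ c t (itemLoad z₂ t)) ∧
    (∀ i : B,
      (Finset.univ.filter fun t => E i t).inf' (hadj i)
        (fun t => c t (itemLoad z₁ t)) ≤
      (Finset.univ.filter fun t => E i t).inf' (hadj i)
        (fun t => c t (itemLoad z₂ t))) :=
  min_cost_marginal_monotone_general E C c hderiv hcmono x₁ x₂ hx z₁ z₂ hz₁ hz₂ hadj
end

section
/- In a finite bipartite market with convex differentiable item costs, let demand vectors satisfy x² ≥ x¹ componentwise and let z¹, z² be respective min-cost allocations. Then ∑_t (C_t(z²_t) − C_t(z¹_t)) ≥ ∑_i r_i(z¹)·(x²_i − x¹_i), where r_i(z¹) is the marginal cost of items used by buyer i in z¹. -/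
open Finset

lemma support_line {f f' : ℝ → ℝ} (hf : ConvexOn ℝ Set.univ f)
    (hd : ∀ v, HasDerivAt f (f' v) v) (x y : ℝ) :
    f' x * (y - x) ≤ f y - f x := by
  rcases lt_trichotomy x y with h | h | h
  · have h1 := hf.le_slope_of_hasDerivAt (Set.mem_univ x) (Set.mem_univ y) h (hd x)
    rw [slope_def_field] at h1
    have h2 := mul_le_mul_of_nonneg_right h1 (by linarith : (0:ℝ) ≤ y - x)
    rwa [div_mul_cancel₀ _ (by linarith : y - x ≠ 0)] at h2
  · subst h; simp
  · have h1 := hf.slope_le_of_hasDerivAt (Set.mem_univ y) (Set.mem_univ x) h (hd x)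
    rw [slope_def_field] at h1
    have h2 := mul_le_mul_of_nonneg_right h1 (by linarith : (0:ℝ) ≤ x - y)
    rw [div_mul_cancel₀ _ (by linarith : x - y ≠ 0)] at h2
    nlinarith

lemma kkt_min_cost {B S : Type*} [Fintype B] [Fintype S] {E : B → S → Prop}
    {C c : S → ℝ → ℝ}
    (hderiv : ∀ t v, HasDerivAt (C t) (c t v) v)
    {x : B → ℝ} {z : B → S → ℝ} (hz : IsMinCost E C x z)
    {i : B} {t s : S} (ht : 0 < z i t) (hEs : E i s) :
    c t (itemLoad z t) ≤ c s (itemLoad z s) := by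
  classical
  obtain ⟨⟨hnn, hsupp, hsum⟩, hopt⟩ := hz
  by_contra hcon
  push_neg at hcon
  have hts : t ≠ s := fun h => by rw [h] at hcon; exact lt_irrefl _ hcon
  set Lt := itemLoad z t with hLt
  set Ls := itemLoad z s with hLs
  set δ := (c t Lt - c s Ls) / 2 with hδ
  have hδpos : 0 < δ := half_pos (sub_pos.mpr hcon)
  have h1 := hasDerivAt_iff_tendsto_slope.mp (hderiv t Lt)
  have h2 := hasDerivAt_iff_tendsto_slope.mp (hderiv s Ls)
  rw [Metric.tendsto_nhdsWithin_nhds] at h1 h2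
  obtain ⟨η₁, hη₁, H1⟩ := h1 δ hδpos
  obtain ⟨η₂, hη₂, H2⟩ := h2 δ hδpos
  set ε := min (min η₁ η₂ / 2) (z i t) with hε
  have hεpos : 0 < ε := lt_min (by positivity) ht
  have hεle : ε ≤ z i t := min_le_right _ _
  have hεη₁ : ε < η₁ :=
    lt_of_le_of_lt (min_le_left _ _) (lt_of_lt_of_le (half_lt_self (lt_min hη₁ hη₂)) (min_le_left _ _))
  have hεη₂ : ε < η₂ :=
    lt_of_le_of_lt (min_le_left _ _) (lt_of_lt_of_le (half_lt_self (lt_min hη₁ hη₂)) (min_le_right _ _))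
  -- slope bounds
  have s1 : dist (slope (C t) Lt (Lt - ε)) (c t Lt) < δ := by
    apply H1
    · simp only [Set.mem_compl_iff, Set.mem_singleton_iff]
      intro h; apply hεpos.ne'; linarith [sub_eq_self.mp h]
    · rw [Real.dist_eq]; rw [show Lt - ε - Lt = -ε by ring, abs_neg, abs_of_pos hεpos]; exact hεη₁
  have s2 : dist (slope (C s) Ls (Ls + ε)) (c s Ls) < δ := by
    apply H2
    · simp only [Set.mem_compl_iff, Set.mem_singleton_iff]
      intro h; apply hεpos.ne'; linarith [add_eq_left.mp h]
    · rw [Real.dist_eq]; rw [show Ls + ε - Ls = ε by ring, abs_of_pos hεpos]; exact hεη₂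
  have e1 : slope (C t) Lt (Lt - ε) = (C t (Lt - ε) - C t Lt) / (-ε) := by
    rw [slope_def_field]; ring_nf
  have e2 : slope (C s) Ls (Ls + ε) = (C s (Ls + ε) - C s Ls) / ε := by
    rw [slope_def_field]; ring_nf
  rw [e1, Real.dist_eq, abs_lt] at s1
  rw [e2, Real.dist_eq, abs_lt] at s2
  have b1 : C t (Lt - ε) - C t Lt < (c t Lt - δ) * (-ε) := by
    have h3 : c t Lt - δ < (C t (Lt - ε) - C t Lt) / (-ε) := by linarith [s1.1]
    exact ((lt_div_iff_of_neg (by linarith : -ε < 0)).mp h3)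
  have b2 : C s (Ls + ε) - C s Ls < (c s Ls + δ) * ε := by
    have h3 : (C s (Ls + ε) - C s Ls) / ε < c s Ls + δ := by linarith [s2.2]
    exact (div_lt_iff₀ hεpos).mp h3
  -- the modified allocation
  set y' : B → S → ℝ := fun i' t' =>
    z i' t' + (if i' = i ∧ t' = t then -ε else 0) + (if i' = i ∧ t' = s then ε else 0) with hy'
  have hfeas : Feasible E x y' := by
    refine ⟨?_, ?_, ?_⟩
    · intro i' t'
      simp only [hy']
      split_ifs with h1 h2 h2
      · exact absurd (h1.2.symm.trans h2.2) hts
      · rw [h1.1, h1.2]; linarith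
      · linarith [hnn i' t']
      · simpa using hnn i' t'
    · intro i' t' hne
      by_cases hA : i' = i ∧ t' = t
      · obtain ⟨rfl, rfl⟩ := hA; exact hsupp i' t' ht.ne'
      · by_cases hB : i' = i ∧ t' = s
        · obtain ⟨rfl, rfl⟩ := hB; exact hEs
        · apply hsupp
          simpa only [hy', if_neg hA, if_neg hB, add_zero] using hne
    · intro i'
      simp only [hy', Finset.sum_add_distrib]
      have e3 : ∑ t', (if i' = i ∧ t' = t then (-ε:ℝ) else 0)
          = if i' = i then -ε else 0 := by
        by_cases hi : i' = i <;> simp [hi]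
      have e4 : ∑ t', (if i' = i ∧ t' = s then (ε:ℝ) else 0)
          = if i' = i then ε else 0 := by
        by_cases hi : i' = i <;> simp [hi]
      rw [e3, e4, hsum i']
      by_cases hi : i' = i <;> simp [hi]
  have hload : ∀ u, itemLoad y' u
      = itemLoad z u + (if u = t then -ε else 0) + (if u = s then ε else 0) := by
    intro u
    simp only [itemLoad, hy', Finset.sum_add_distrib]
    have e3 : ∑ i', (if i' = i ∧ u = t then (-ε:ℝ) else 0) = if u = t then -ε else 0 := by
      by_cases hu : u = t <;> simp [hu]
    have e4 : ∑ i', (if i' = i ∧ u = s then (ε:ℝ) else 0) = if u = s then ε else 0 := by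
      by_cases hu : u = s <;> simp [hu]
    rw [e3, e4]
  have hdiff : totalCost C y' - totalCost C z
      = (C t (Lt - ε) - C t Lt) + (C s (Ls + ε) - C s Ls) := by
    unfold totalCost
    rw [← Finset.sum_sub_distrib]
    rw [← Finset.sum_subset (Finset.subset_univ ({t, s} : Finset S))]
    · rw [Finset.sum_pair hts, hload t, hload s]
      rw [if_pos rfl, if_pos rfl, if_neg hts, if_neg (Ne.symm hts)]
      rw [← hLt, ← hLs]
      ring_nf
    · intro u _ hu
      simp only [Finset.mem_insert, Finset.mem_singleton] at hu
      push_neg at hu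
      rw [hload u, if_neg hu.1, if_neg hu.2]
      simp
  have hlt2 : totalCost C y' < totalCost C z := by
    have hz0 : (c t Lt - δ) * (-ε) + (c s Ls + δ) * ε = 0 := by rw [hδ]; ring
    linarith [hdiff, b1, b2]
  exact absurd (hopt y' hfeas) (not_le.mpr hlt2)

/-- Cost-difference lower bound between min-cost flows of nested demands:
∑_t (C_t(z²_t) − C_t(z¹_t)) ≥ ∑_i r_i(z¹)·(x²_i − x¹_i). -/
theorem min_cost_cost_difference_bound {B S : Type*} [Fintype B] [Fintype S]
    (E : B → S → Prop) [∀ i t, Decidable (E i t)]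
    (C c : S → ℝ → ℝ)
    (hCconv : ∀ t, ConvexOn ℝ Set.univ (C t))
    (hderiv : ∀ t v, HasDerivAt (C t) (c t v) v)
    (hcmono : ∀ t, Monotone (c t))
    (x₁ x₂ : B → ℝ) (hx : ∀ i, x₁ i ≤ x₂ i)
    (z₁ z₂ : B → S → ℝ)
    (hz₁ : IsMinCost E C x₁ z₁) (hz₂ : IsMinCost E C x₂ z₂)
    (hadj : ∀ i : B, (Finset.univ.filter fun t => E i t).Nonempty) :
    ∑ t, (C t (itemLoad z₂ t) - C t (itemLoad z₁ t)) ≥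
      ∑ i, ((Finset.univ.filter fun t => E i t).inf' (hadj i)
        (fun t => c t (itemLoad z₁ t))) * (x₂ i - x₁ i) := by
  classical
  have hz₁' := hz₁
  obtain ⟨⟨hnn1, hsupp1, hsum1⟩, _⟩ := hz₁
  obtain ⟨⟨hnn2, hsupp2, hsum2⟩, _⟩ := hz₂
  set r : B → ℝ := fun i => (Finset.univ.filter fun t => E i t).inf' (hadj i)
    (fun t => c t (itemLoad z₁ t)) with hr
  have stepA : ∑ t, c t (itemLoad z₁ t) * (itemLoad z₂ t - itemLoad z₁ t)
      ≤ ∑ t, (C t (itemLoad z₂ t) - C t (itemLoad z₁ t)) :=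
    Finset.sum_le_sum fun t _ =>
      support_line (hCconv t) (hderiv t) (itemLoad z₁ t) (itemLoad z₂ t)
  have stepB : ∑ t, c t (itemLoad z₁ t) * (itemLoad z₂ t - itemLoad z₁ t)
      = ∑ i, ∑ t, (c t (itemLoad z₁ t) * z₂ i t - c t (itemLoad z₁ t) * z₁ i t) := by
    rw [← Finset.sum_comm]
    refine Finset.sum_congr rfl fun t _ => ?_
    simp only [itemLoad, ← Finset.sum_sub_distrib, Finset.mul_sum, mul_sub]
  have stepC : ∀ i, r i * (x₂ i - x₁ i)
      ≤ ∑ t, (c t (itemLoad z₁ t) * z₂ i t - c t (itemLoad z₁ t) * z₁ i t) := by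
    intro i
    have h2 : r i * x₂ i ≤ ∑ t, c t (itemLoad z₁ t) * z₂ i t := by
      calc r i * x₂ i = ∑ t, r i * z₂ i t := by rw [← Finset.mul_sum, hsum2 i]
        _ ≤ ∑ t, c t (itemLoad z₁ t) * z₂ i t := by
            refine Finset.sum_le_sum fun t _ => ?_
            by_cases h : z₂ i t = 0
            · simp [h]
            · refine mul_le_mul_of_nonneg_right ?_ (hnn2 i t)
              exact Finset.inf'_le _ (Finset.mem_filter.mpr ⟨Finset.mem_univ t, hsupp2 i t h⟩)
    have h1 : ∑ t, c t (itemLoad z₁ t) * z₁ i t = r i * x₁ i := by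
      calc ∑ t, c t (itemLoad z₁ t) * z₁ i t = ∑ t, r i * z₁ i t := by
            refine Finset.sum_congr rfl fun t _ => ?_
            by_cases h : z₁ i t = 0
            · simp [h]
            · have hpos : 0 < z₁ i t := lt_of_le_of_ne (hnn1 i t) (Ne.symm h)
              have hle : c t (itemLoad z₁ t) ≤ r i := by
                refine Finset.le_inf' _ _ fun u hu => ?_
                exact kkt_min_cost hderiv hz₁' hpos (Finset.mem_filter.mp hu).2
              have hge : r i ≤ c t (itemLoad z₁ t) :=
                Finset.inf'_le _ (Finset.mem_filter.mpr ⟨Finset.mem_univ t, hsupp1 i t h⟩)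
              rw [le_antisymm hle hge]
        _ = r i * x₁ i := by rw [← Finset.mul_sum, hsum1 i]
    rw [Finset.sum_sub_distrib]
    have : r i * (x₂ i - x₁ i) = r i * x₂ i - r i * x₁ i := by ring
    linarith
  calc ∑ i, r i * (x₂ i - x₁ i)
      ≤ ∑ i, ∑ t, (c t (itemLoad z₁ t) * z₂ i t - c t (itemLoad z₁ t) * z₁ i t) :=
        Finset.sum_le_sum fun i _ => stepC i
    _ = ∑ t, c t (itemLoad z₁ t) * (itemLoad z₂ t - itemLoad z₁ t) := stepB.symm
    _ ≤ _ := stepA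
end

section
/- Suppose π₁ ≥ (1/e)·A + (1/√e)·B and π₂ ≥ (1/√e)·A + (1/2)·B for non-negative reals A, B with A + B ≥ π*. Then max(π₁, π₂) ≥ π*/(4√e − 2 − e). -/
/-! Mixing the two guarantees with weights `t` and `1 - t`, where `s = √e` and
`t = s (2 - s) / (4s - 2 - s²)`, gives `A` and `B` the same coefficient `1 / (4s - 2 - s²)`.
Since the maximum dominates every convex combination, `max π₁ π₂ ≥ (A + B) / (4s - 2 - s²)`. -/

open Real

lemma mul_le_max_of_balanced_combo {A B P x y a₁ b₁ a₂ b₂ t c : ℝ}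
    (ht₀ : 0 ≤ t) (ht₁ : t ≤ 1) (hc : 0 ≤ c)
    (ha : t * a₁ + (1 - t) * a₂ = c) (hb : t * b₁ + (1 - t) * b₂ = c)
    (hP : P ≤ A + B) (hx : a₁ * A + b₁ * B ≤ x) (hy : a₂ * A + b₂ * B ≤ y) :
    c * P ≤ max x y :=
  calc c * P ≤ c * (A + B) := mul_le_mul_of_nonneg_left hP hc
    _ = t * (a₁ * A + b₁ * B) + (1 - t) * (a₂ * A + b₂ * B) := by
      linear_combination -A * ha - B * hb
    _ ≤ t * x + (1 - t) * y := by gcongr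
    _ ≤ max x y := Convex.combo_le_max x y ht₀ (by linarith) (by ring)

lemma div_le_max_of_ge_div_sq_add {A B P x y s : ℝ} (hs₁ : 1 ≤ s) (hs₂ : s ≤ 2)
    (hP : P ≤ A + B) (hx : 1 / s ^ 2 * A + 1 / s * B ≤ x) (hy : 1 / s * A + 1 / 2 * B ≤ y) :
    P / (4 * s - 2 - s ^ 2) ≤ max x y := by
  have hD : 0 < 4 * s - 2 - s ^ 2 := by nlinarith
  have hs : s ≠ 0 := by positivity
  have hD' := hD.ne'
  rw [div_eq_inv_mul]
  refine mul_le_max_of_balanced_combo (t := s * (2 - s) / (4 * s - 2 - s ^ 2))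
    (by apply div_nonneg <;> nlinarith) ?_ (inv_nonneg.2 hD.le) ?_ ?_ hP hx hy
  · rw [div_le_one hD]; nlinarith
  all_goals rw [one_sub_div hD']; field_simp; ring

lemma one_le_sqrt_exp_one : 1 ≤ √(exp 1) :=
  one_le_sqrt.2 (one_le_exp zero_le_one)

lemma sqrt_exp_one_le_two : √(exp 1) ≤ 2 :=
  sqrt_le_iff.2 ⟨zero_le_two, by linarith [exp_one_lt_d9]⟩

theorem approx_balancing_general (A B πstar π₁ π₂ : ℝ)
    (hAB : A + B ≥ πstar)
    (h₁ : π₁ ≥ (1/Real.exp 1) * A + (1/Real.sqrt (Real.exp 1)) * B)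
    (h₂ : π₂ ≥ (1/Real.sqrt (Real.exp 1)) * A + (1/2) * B) :
    max π₁ π₂ ≥ πstar / (4 * Real.sqrt (Real.exp 1) - 2 - Real.exp 1) := by
  have he : √(exp 1) ^ 2 = exp 1 := sq_sqrt (exp_pos 1).le
  have hmax := div_le_max_of_ge_div_sq_add (x := π₁) one_le_sqrt_exp_one sqrt_exp_one_le_two hAB
    (by rwa [he]) h₂
  rwa [he] at hmax

/-- Algebraic balancing step for the 1.877-approximation: if
π₁ ≥ A/e + B/√e and π₂ ≥ A/√e + B/2 with A + B ≥ π*, then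
max(π₁, π₂) ≥ π*/(4√e − 2 − e). -/
theorem approx_balancing (A B πstar π₁ π₂ : ℝ)
    (hA : 0 ≤ A) (hB : 0 ≤ B) (hAB : A + B ≥ πstar)
    (h₁ : π₁ ≥ (1/Real.exp 1) * A + (1/Real.sqrt (Real.exp 1)) * B)
    (h₂ : π₂ ≥ (1/Real.sqrt (Real.exp 1)) * A + (1/2) * B) :
    max π₁ π₂ ≥ πstar / (4 * Real.sqrt (Real.exp 1) - 2 - Real.exp 1) :=
  approx_balancing_general A B πstar π₁ π₂ hAB h₁ h₂
end
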